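/- arXiv:1712.04228 — 2 statements merged into one kernel-verified Lean document; each statement's English description precedes it below -/
import Mathlib

section
/- Every connected cograph of order at least 4 that has a unique perfect matching contains a vertex of degree 1. -/
/-- A cograph is a graph with no induced path on four vertices. -/
def IsCograph {V : Type*} (G : SimpleGraph V) : Prop :=
  ¬ ∃ f : Fin 4 → V, Function.Injective f ∧
      ∀ i j : Fin 4, G.Adj (f i) (f j) ↔ (SimpleGraph.pathGraph 4).Adj i j

/-
A cograph `G` on at least two vertices has a disconnected complement. Indeed, a vertex `v` whose
deletion disconnects a connected cograph is adjacent to all other vertices: otherwise, inside one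
component of `G - v`, an edge from a non-neighbour to a neighbour of `v`, followed by `v` and a
neighbour of `v` in another component, is an induced `P₄`. So if `G` and `Gᶜ` were both connected,
by induction one of `G - v`, `Gᶜ - v` would be disconnected, and `v` would be isolated in `Gᶜ` or
`G`.

Hence `G` is the join of two nonempty vertex sets `A` and `B`. If both had two vertices, two edges
of the perfect matching could be exchanged along an alternating 4-cycle using the join edges,
contradicting uniqueness. So `G` has a universal vertex `v`, and the same exchange shows that the
partner of `v` in the matching has no other neighbour.
-/

open SimpleGraph

section

variable {V : Type*} {G : SimpleGraph V}

namespace SimpleGraph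

theorem Connected.not_isIsolated [Nontrivial V] (h : G.Connected) (v : V) : ¬G.IsIsolated v := by
  obtain ⟨w, hw⟩ := exists_ne v
  obtain ⟨p⟩ := h.preconnected v w
  exact (p.adj_snd (Walk.not_nil_of_ne hw.symm)).not_isIsolated_left

theorem compl_induce (G : SimpleGraph V) (s : Set V) : (G.induce s)ᶜ = Gᶜ.induce s := by
  ext u w
  simp [compl_adj, Subtype.ext_iff]

theorem Reachable.exists_adj_reachable_induce_compl_singleton {u v : V} (h : G.Reachable u v)
    (hu : u ≠ v) :
    ∃ (c : V) (hc : c ≠ v), G.Adj c v ∧ (G.induce {v}ᶜ).Reachable ⟨u, hu⟩ ⟨c, hc⟩ := by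
  obtain ⟨p⟩ := h
  induction p with
  | nil => exact absurd rfl hu
  | @cons u z v huz q ih =>
    by_cases hz : z = v
    · exact ⟨u, hu, hz ▸ huz, .refl _⟩
    · obtain ⟨c, hc, hcv, hzc⟩ := ih hz
      exact ⟨c, hc, hcv, (show (G.induce {v}ᶜ).Adj ⟨u, hu⟩ ⟨z, hz⟩ from huz).reachable.trans hzc⟩

theorem exists_isCompleteBetween_compl_of_not_connected_compl [Nonempty V]
    (h : ¬Gᶜ.Connected) : ∃ s : Set V, G.IsCompleteBetween s sᶜ ∧ s.Nonempty ∧ sᶜ.Nonempty := by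
  obtain ⟨x⟩ := ‹Nonempty V›
  obtain ⟨y, hy⟩ : ∃ y, ¬Gᶜ.Reachable x y := by
    by_contra! hx
    exact h ((connected_iff_exists_forall_reachable _).2 ⟨x, hx⟩)
  refine ⟨{w | Gᶜ.Reachable x w}, fun u hu w hw => ?_, ⟨x, .refl x⟩, ⟨y, hy⟩⟩
  by_contra huw
  exact hw (hu.trans ((compl_adj G u w).2 ⟨fun h => hw (h ▸ hu), huw⟩).reachable)

end SimpleGraph

theorem not_isCograph_of_inducedPath {a b c d : V} (hab : G.Adj a b) (hbc : G.Adj b c)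
    (hcd : G.Adj c d) (hac : ¬G.Adj a c) (hbd : ¬G.Adj b d) (had : ¬G.Adj a d) :
    ¬IsCograph G := by
  intro hG
  have hadj : ∀ i j, G.Adj (![a, b, c, d] i) (![a, b, c, d] j) ↔ (pathGraph 4).Adj i j := by
    intro i j
    fin_cases i <;> fin_cases j <;> simp [pathGraph_adj, G.adj_comm, *]
  refine hG ⟨![a, b, c, d], fun i j hij => ?_, hadj⟩
  have : ∀ k, (pathGraph 4).Adj i k ↔ (pathGraph 4).Adj j k := fun k => by rw [← hadj, ← hadj, hij]
  clear hij hadj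
  revert i j
  simp only [pathGraph_adj]
  decide

theorem IsCograph.compl (hG : IsCograph G) : IsCograph Gᶜ := by
  rintro ⟨f, hf, hadj⟩
  -- `P₄` is self-complementary: the complement of the path `0-1-2-3` is the path `1-3-0-2`.
  have key : ∀ i j, i ≠ j → (G.Adj (f i) (f j) ↔ ¬(pathGraph 4).Adj i j) := by
    intro i j hij
    rw [← hadj, compl_adj, hf.ne_iff]
    tauto
  refine not_isCograph_of_inducedPath (a := f 1) (b := f 3) (c := f 0) (d := f 2)
    ?_ ?_ ?_ ?_ ?_ ?_ hG <;> simp [key, pathGraph_adj]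

theorem IsCograph.induce (hG : IsCograph G) (s : Set V) : IsCograph (G.induce s) :=
  fun ⟨f, hf, hadj⟩ => hG ⟨fun i => f i, Subtype.val_injective.comp hf, hadj⟩

theorem IsCograph.isUniversal_of_not_connected_induce (hG : IsCograph G) (hconn : G.Connected)
    {v : V} (hv : ¬(G.induce {v}ᶜ).Connected) : G.IsUniversal v := by
  intro b hvb
  by_contra hnb
  set H := G.induce {v}ᶜ
  have reach : ∀ u (hu : u ≠ v), ∃ (c : V) (hc : c ≠ v), G.Adj c v ∧ H.Reachable ⟨u, hu⟩ ⟨c, hc⟩ :=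
    fun u hu => (hconn.preconnected u v).exists_adj_reachable_induce_compl_singleton hu
  obtain ⟨c, hc, hcv, ⟨p⟩⟩ := reach b hvb.symm
  obtain ⟨⟨⟨c₂, c₁⟩, h₂₁⟩, -, hc₂, hc₁⟩ :=
    p.exists_boundary_dart {x | ¬G.Adj v x} hnb (by simpa using hcv.symm)
  have h₂₁ : G.Adj c₂ c₁ := h₂₁
  have h₂v : ¬G.Adj c₂ v := fun h => hc₂ h.symm
  have h₁v : G.Adj c₁ v := (not_not.1 hc₁).symm
  obtain ⟨y, hy⟩ : ∃ y, ¬H.Reachable c₁ y := by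
    by_contra! h
    exact hv ((connected_iff_exists_forall_reachable H).2 ⟨c₁, h⟩)
  obtain ⟨d, hd, hdv, hyd⟩ := reach y y.2
  have hc₁d : ¬G.Adj c₁ d := fun h =>
    hy ((show H.Adj c₁ ⟨d, hd⟩ from h).reachable.trans hyd.symm)
  have hc₂d : ¬G.Adj c₂ d := fun h =>
    hy ((show H.Adj c₁ c₂ from h₂₁.symm).reachable.trans
      ((show H.Adj c₂ ⟨d, hd⟩ from h).reachable.trans hyd.symm))
  exact not_isCograph_of_inducedPath h₂₁ h₁v hdv.symm h₂v hc₁d hc₂d hG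

theorem IsCograph.not_connected_compl [Finite V] [Nontrivial V] (hG : IsCograph G)
    (hconn : G.Connected) : ¬Gᶜ.Connected := by
  induction h : Nat.card V using Nat.strong_induction_on generalizing V with
  | _ n ih =>
    intro hconnc
    obtain ⟨v⟩ : Nonempty V := inferInstance
    have key : G.IsUniversal v ∨ Gᶜ.IsUniversal v := by
      by_cases hH : (G.induce {v}ᶜ).Connected
      · by_cases hHc : (Gᶜ.induce {v}ᶜ).Connected
        · have : Subsingleton ({v}ᶜ : Set V) := not_nontrivial_iff_subsingleton.1 fun _ =>
            ih _ (h ▸ Finite.card_subtype_lt (x := v) (by simp)) (hG.induce _) hH rfl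
              (compl_induce G _ ▸ hHc)
          obtain ⟨w, hvw⟩ := exists_adj_iff_not_isIsolated.2 (hconn.not_isIsolated v)
          refine .inl fun u hvu => ?_
          obtain rfl : u = w := congrArg Subtype.val
            (Subsingleton.elim (α := ({v}ᶜ : Set V)) ⟨u, hvu.symm⟩ ⟨w, hvw.ne.symm⟩)
          exact hvw
        · exact .inr (hG.compl.isUniversal_of_not_connected_induce hconnc hHc)
      · exact .inl (hG.isUniversal_of_not_connected_induce hconn hH)
    rcases key with h | h
    · exact hconnc.not_isIsolated v (isIsolated_compl_iff_isUniversal.2 h)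
    · exact hconn.not_isIsolated v (isUniversal_compl_iff_isIsolated.1 h)

namespace SimpleGraph

namespace Subgraph

variable {M : G.Subgraph}

theorem IsPerfectMatching.exists_map_perm (hM : M.IsPerfectMatching) (σ : Equiv.Perm V)
    (hσ : ∀ u w, M.Adj u w → G.Adj (σ u) (σ w)) :
    ∃ M' : G.Subgraph, M'.IsPerfectMatching ∧ ∀ u w, M'.Adj (σ u) (σ w) ↔ M.Adj u w := by
  refine ⟨{ verts := .univ
            Adj u w := M.Adj (σ.symm u) (σ.symm w)
            adj_sub h := by simpa using hσ _ _ h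
            edge_vert _ := trivial
            symm := ⟨fun _ _ h => h.symm⟩ }, ?_, fun u w => by simp⟩
  rw [isPerfectMatching_iff] at hM ⊢
  intro u
  obtain ⟨w, hw, huniq⟩ := hM (σ.symm u)
  exact ⟨σ w, by simpa using hw, fun w' h => σ.symm_apply_eq.1 (huniq _ h)⟩

theorem IsPerfectMatching.exists_ne_of_adj_of_adj (hM : M.IsPerfectMatching) {a b c d : V}
    (hab : M.Adj a b) (hcd : M.Adj c d) (hbc : b ≠ c) (hac : G.Adj a c) (hbd : G.Adj b d) :
    ∃ M' : G.Subgraph, M'.IsPerfectMatching ∧ M' ≠ M := by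
  classical
  -- The only edges of `M` meeting `b` or `c` are `ab` and `cd`, which the swap sends to `ac` and
  -- `bd`; every other edge of `M` is fixed.
  have hσ : ∀ u w, M.Adj u w → G.Adj (Equiv.swap b c u) (Equiv.swap b c w) := by
    grind [Adj.adj_sub, SimpleGraph.Adj.ne, SimpleGraph.Adj.symm, Adj.symm, hM.1.eq_of_adj_left]
  obtain ⟨M', hM', hadj⟩ := hM.exists_map_perm (Equiv.swap b c) hσ
  refine ⟨M', hM', fun h => hbc (hM.1.eq_of_adj_left hab ?_)⟩
  have := (hadj a b).2 hab
  rwa [h, Equiv.swap_apply_left, Equiv.swap_apply_of_ne_of_ne (M.adj_sub hab).ne hac.ne] at this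

theorem IsPerfectMatching.exists_ne_of_isCompleteBetween_of_forall_not_adj
    (hM : M.IsPerfectMatching) {s : Set V} (hs : G.IsCompleteBetween s sᶜ) (hsn : s.Nontrivial)
    (hin : ∀ a ∈ s, ∀ b ∈ s, ¬M.Adj a b) : ∃ M' : G.Subgraph, M'.IsPerfectMatching ∧ M' ≠ M := by
  obtain ⟨a₁, ha₁, a₂, ha₂, hne⟩ := hsn
  obtain ⟨z₁, hz₁, -⟩ := hM.1 (hM.2 a₁)
  obtain ⟨z₂, hz₂, -⟩ := hM.1 (hM.2 a₂)
  have hz₁s : z₁ ∉ s := fun h => hin a₁ ha₁ z₁ h hz₁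
  have hz₂s : z₂ ∉ s := fun h => hin a₂ ha₂ z₂ h hz₂
  exact hM.exists_ne_of_adj_of_adj hz₁.symm hz₂ hne (hs ha₂ hz₁s).symm (hs ha₁ hz₂s)

theorem IsPerfectMatching.exists_ne_of_isCompleteBetween (hM : M.IsPerfectMatching) {s : Set V}
    (hs : G.IsCompleteBetween s sᶜ) (hsn : s.Nontrivial) (hscn : sᶜ.Nontrivial) :
    ∃ M' : G.Subgraph, M'.IsPerfectMatching ∧ M' ≠ M := by
  by_cases hin : ∀ a ∈ s, ∀ b ∈ s, ¬M.Adj a b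
  · exact hM.exists_ne_of_isCompleteBetween_of_forall_not_adj hs hsn hin
  by_cases hout : ∀ a ∈ sᶜ, ∀ b ∈ sᶜ, ¬M.Adj a b
  · refine hM.exists_ne_of_isCompleteBetween_of_forall_not_adj ?_ hscn hout
    rw [compl_compl]
    exact hs.symm
  push Not at hin hout
  obtain ⟨a, ha, a', ha', haa'⟩ := hin
  obtain ⟨b, hb, b', hb', hbb'⟩ := hout
  exact hM.exists_ne_of_adj_of_adj haa' hbb'.symm (fun h => hb' (h ▸ ha')) (hs ha hb') (hs ha' hb)

end Subgraph

theorem exists_isUniversal_of_isCompleteBetween (hupm : ∃! M : G.Subgraph, M.IsPerfectMatching)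
    {s : Set V} (hs : G.IsCompleteBetween s sᶜ) (hne : s.Nonempty) (hcne : sᶜ.Nonempty) :
    ∃ v, G.IsUniversal v := by
  obtain ⟨M, hM⟩ := hupm.exists
  by_cases hsn : s.Nontrivial
  · by_cases hscn : sᶜ.Nontrivial
    · obtain ⟨M', hM', hne'⟩ := hM.exists_ne_of_isCompleteBetween hs hsn hscn
      exact absurd (hupm.unique hM' hM) hne'
    · obtain ⟨v, hv⟩ := hcne
      refine ⟨v, fun w hvw => (hs ?_ hv).symm⟩
      by_contra hw
      exact hvw (Set.not_nontrivial_iff.1 hscn hv hw)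
  · obtain ⟨v, hv⟩ := hne
    exact ⟨v, fun w hvw => hs hv fun hw => hvw (Set.not_nontrivial_iff.1 hsn hv hw)⟩

theorem IsUniversal.exists_degree_eq_one [Fintype V] [DecidableRel G.Adj]
    (hupm : ∃! M : G.Subgraph, M.IsPerfectMatching) {v : V} (hv : G.IsUniversal v) :
    ∃ u, G.degree u = 1 := by
  obtain ⟨M, hM⟩ := hupm.exists
  obtain ⟨u, hvu, -⟩ := hM.1 (hM.2 v)
  refine ⟨u, degree_eq_one_iff_existsUnique_adj.2 ⟨v, (M.adj_sub hvu).symm, fun w huw => ?_⟩⟩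
  by_contra hwv
  obtain ⟨z, hwz, -⟩ := hM.1 (hM.2 w)
  have hvz : v ≠ z := by
    rintro rfl
    exact huw.ne (hM.1.eq_of_adj_left hvu hwz.symm)
  obtain ⟨M', hM', hne⟩ := hM.exists_ne_of_adj_of_adj hvu.symm hwz (Ne.symm hwv) huw (hv hvz)
  exact hne (hupm.unique hM' hM)

end SimpleGraph

end

theorem connected_cograph_unique_pm_degree_one_general {V : Type*} [Fintype V]
    (G : SimpleGraph V) [DecidableRel G.Adj]
    (hco : IsCograph G) (hconn : G.Connected) (hcard : 4 ≤ Fintype.card V)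
    (hupm : ∃! M : G.Subgraph, M.IsPerfectMatching) :
    ∃ v : V, G.degree v = 1 := by
  have : Nontrivial V := Fintype.one_lt_card_iff_nontrivial.1 (by omega)
  obtain ⟨s, hs, hne, hcne⟩ :=
    exists_isCompleteBetween_compl_of_not_connected_compl (hco.not_connected_compl hconn)
  obtain ⟨v, hv⟩ := exists_isUniversal_of_isCompleteBetween hupm hs hne hcne
  exact hv.exists_degree_eq_one hupm

theorem connected_cograph_unique_pm_degree_one {V : Type*} [Fintype V]
    [DecidableEq V] (G : SimpleGraph V) [DecidableRel G.Adj]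
    (hco : IsCograph G) (hconn : G.Connected) (hcard : 4 ≤ Fintype.card V)
    (hupm : ∃! M : G.Subgraph, M.IsPerfectMatching) :
    ∃ v : V, G.degree v = 1 :=
  connected_cograph_unique_pm_degree_one_general G hco hconn hcard hupm
end

section
/- Let G be a finite simple graph with a unique perfect matching whose vertex set is partitioned into an independent set S and a clique C. Then |C| − |S| equals 0 or 2. -/
/-!
Let `f` be the mate function of the perfect matching `M`. Every vertex of the independent set `S`
is matched into the clique `C`, so `C` consists of `f '' S`, of size `|S|`, and of the vertices of
`C` matched inside `C`. Two distinct matching edges `xx'`, `yy'` inside the clique would close the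
alternating 4-cycle `x y y' x'`; switching along it gives a second perfect matching. Hence `C`
contains at most one matching edge, and `|C| - |S| ∈ {0, 2}`.
-/

open Function

namespace SimpleGraph.Subgraph

variable {V : Type*} {G : SimpleGraph V} {M : G.Subgraph}

theorem IsPerfectMatching.exists_involutive (hM : M.IsPerfectMatching) :
    ∃ f : V → V, Involutive f ∧ ∀ v w, M.Adj v w ↔ f v = w := by
  choose f hadj hunique using isPerfectMatching_iff.mp hM
  refine ⟨f, fun v => (hunique _ _ (hadj v).symm).symm, fun v w => ⟨?_, ?_⟩⟩
  · exact fun h => (hunique v w h).symm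
  · rintro rfl
    exact hadj v

def relabel (M : G.Subgraph) (τ : Equiv.Perm V) (h : ∀ x y, M.Adj (τ x) (τ y) → G.Adj x y) :
    G.Subgraph where
  verts := τ ⁻¹' M.verts
  Adj x y := M.Adj (τ x) (τ y)
  adj_sub := h _ _
  edge_vert := M.edge_vert
  symm := ⟨fun _ _ h => M.adj_symm h⟩

theorem IsPerfectMatching.relabel (hM : M.IsPerfectMatching) (τ : Equiv.Perm V)
    (h : ∀ x y, M.Adj (τ x) (τ y) → G.Adj x y) : (M.relabel τ h).IsPerfectMatching := by
  rw [isPerfectMatching_iff]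
  intro x
  obtain ⟨w, hw, hunique⟩ := hM.1 (hM.2 (τ x))
  refine ⟨τ.symm w, by simpa [Subgraph.relabel] using hw, fun y hy => ?_⟩
  rw [← hunique _ hy, Equiv.symm_apply_apply]

/-- Switching `M` along the alternating 4-cycle `a c d b`: conjugating by the transposition of
`b` and `c` replaces the matching edges `ab`, `cd` by `ac`, `bd`. -/
theorem IsPerfectMatching.exists_isPerfectMatching_adj {a b c d : V} (hM : M.IsPerfectMatching)
    (hab : M.Adj a b) (hcd : M.Adj c d) (hac : G.Adj a c) (hbd : G.Adj b d) :
    ∃ M' : G.Subgraph, M'.IsPerfectMatching ∧ M'.Adj a c := by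
  classical
  set τ := Equiv.swap b c
  have hτa : τ a = a := Equiv.swap_apply_of_ne_of_ne hab.ne hac.ne
  have hτd : τ d = d := Equiv.swap_apply_of_ne_of_ne hbd.ne.symm hcd.ne.symm
  have hleft : ∀ x y, M.Adj (τ x) (τ y) → x = b ∨ x = c → G.Adj x y := by
    rintro x y h (rfl | rfl)
    · rw [Equiv.swap_apply_left] at h
      obtain rfl : y = d := by
        rw [← hτd, ← Equiv.swap_apply_eq_iff]
        exact hM.1.eq_of_adj_left h hcd
      exact hbd
    · rw [Equiv.swap_apply_right] at h
      obtain rfl : y = a := by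
        rw [← hτa, ← Equiv.swap_apply_eq_iff]
        exact hM.1.eq_of_adj_left h hab.symm
      exact hac.symm
  have hsub : ∀ x y, M.Adj (τ x) (τ y) → G.Adj x y := by
    intro x y h
    by_cases hx : x = b ∨ x = c
    · exact hleft x y h hx
    by_cases hy : y = b ∨ y = c
    · exact (hleft y x h.symm hy).symm
    push Not at hx hy
    rw [Equiv.swap_apply_of_ne_of_ne hx.1 hx.2, Equiv.swap_apply_of_ne_of_ne hy.1 hy.2] at h
    exact h.adj_sub
  refine ⟨M.relabel τ hsub, hM.relabel τ hsub, ?_⟩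
  change M.Adj (τ a) (τ c)
  rwa [hτa, Equiv.swap_apply_right]

theorem IsPerfectMatching.eq_of_adj_of_existsUnique {a b c d : V}
    (hupm : ∃! M : G.Subgraph, M.IsPerfectMatching) (hM : M.IsPerfectMatching)
    (hab : M.Adj a b) (hcd : M.Adj c d) (hac : G.Adj a c) (hbd : G.Adj b d) : b = c := by
  obtain ⟨M', hM', hM'ac⟩ := hM.exists_isPerfectMatching_adj hab hcd hac hbd
  obtain rfl : M' = M := hupm.unique hM' hM
  exact hM.1.eq_of_adj_left hab hM'ac

theorem IsPerfectMatching.eq_or_eq_of_isClique {K : Set V} {x x' y y' : V}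
    (hupm : ∃! M : G.Subgraph, M.IsPerfectMatching) (hM : M.IsPerfectMatching)
    (hK : G.IsClique K) (hx : M.Adj x x') (hy : M.Adj y y')
    (hxK : x ∈ K) (hx'K : x' ∈ K) (hyK : y ∈ K) (hy'K : y' ∈ K) : y = x ∨ y = x' := by
  by_cases hyx : y = x
  · exact Or.inl hyx
  have hx'y' : x' ≠ y' := fun h => hyx (hM.1.eq_of_adj_right hx (h ▸ hy)).symm
  exact Or.inr (hM.eq_of_adj_of_existsUnique hupm hx hy (hK hxK hyK (Ne.symm hyx))
    (hK hx'K hy'K hx'y')).symm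

end SimpleGraph.Subgraph

namespace Finset

variable {α : Type*} [DecidableEq α] {f : α → α}

theorem card_eq_card_add_card_filter_of_involutive [Fintype α] (hf : Involutive f) {S C : Finset α}
    (hdisj : Disjoint S C) (hunion : S ∪ C = univ) (hS : ∀ s ∈ S, f s ∈ C) :
    C.card = S.card + (C.filter (fun c => f c ∈ C)).card := by
  have himage : C.filter (fun c => f c ∉ C) = S.image f := by
    ext c
    simp only [mem_filter, mem_image]
    constructor
    · rintro ⟨hc, hfc⟩
      exact ⟨f c, (mem_union.mp (hunion ▸ mem_univ (f c))).resolve_right hfc, hf c⟩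
    · rintro ⟨s, hs, rfl⟩
      rw [hf s]
      exact ⟨hS s hs, disjoint_left.mp hdisj hs⟩
  rw [← card_filter_add_card_filter_not (fun c => f c ∈ C), himage,
    card_image_of_injective S hf.injective, add_comm]

theorem card_eq_zero_or_two_of_forall_eq_or_eq {T : Finset α} (hfix : ∀ x, f x ≠ x)
    (hT : ∀ x ∈ T, f x ∈ T) (hsub : ∀ x ∈ T, ∀ y ∈ T, y = x ∨ y = f x) :
    T.card = 0 ∨ T.card = 2 := by
  rcases T.eq_empty_or_nonempty with rfl | ⟨x, hx⟩
  · exact Or.inl rfl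
  have hpair : T = {x, f x} := by
    ext y
    simp only [mem_insert, mem_singleton]
    refine ⟨hsub x hx y, ?_⟩
    rintro (rfl | rfl)
    exacts [hx, hT x hx]
  exact Or.inr (hpair ▸ card_pair (hfix x).symm)

end Finset

theorem split_partition_card_diff {V : Type*} [Fintype V] [DecidableEq V]
    (G : SimpleGraph V) (S C : Finset V)
    (hdisj : Disjoint S C) (hunion : S ∪ C = Finset.univ)
    (hindep : ∀ a ∈ S, ∀ b ∈ S, ¬ G.Adj a b)
    (hclique : G.IsClique (C : Set V))
    (hupm : ∃! M : G.Subgraph, M.IsPerfectMatching) :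
    C.card = S.card ∨ C.card = S.card + 2 := by
  obtain ⟨M, hM⟩ := hupm.exists
  obtain ⟨f, hf, hMf⟩ := hM.exists_involutive
  have hadj : ∀ v, M.Adj v (f v) := fun v => (hMf v _).2 rfl
  have hS : ∀ s ∈ S, f s ∈ C := fun s hs =>
    (Finset.mem_union.mp (hunion ▸ Finset.mem_univ (f s))).resolve_left
      fun h => hindep s hs _ h (hadj s).adj_sub
  have hinner := Finset.card_eq_zero_or_two_of_forall_eq_or_eq (T := C.filter (f · ∈ C))
    (fun v => (hadj v).adj_sub.ne.symm)
    (fun x hx => by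
      rw [Finset.mem_filter] at hx ⊢
      exact ⟨hx.2, (hf x).symm ▸ hx.1⟩)
    (fun x hx y hy => by
      rw [Finset.mem_filter] at hx hy
      exact hM.eq_or_eq_of_isClique hupm hclique (hadj x) (hadj y) hx.1 hx.2 hy.1 hy.2)
  rw [Finset.card_eq_card_add_card_filter_of_involutive hf hdisj hunion hS]
  omega
end
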